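/- arXiv:math/0106128 — 12 statements merged into one kernel-verified Lean document; each statement's English description precedes it below -/
import Mathlib

section
/- Let F : ℂ → ℂ be analytic at a point z₀ with F(z₀) = z₀, and suppose F is involutive near z₀, i.e. F(F(z)) = z for all z in some neighborhood of z₀. Then the derivative F′(z₀) equals 1 or −1; moreover, if F′(z₀) = 1, then F(z) = z for all z in a neighborhood of z₀. -/
open Filter Topology

variable {𝕜 : Type*} [NontriviallyNormedField 𝕜]

theorem HasDerivAt.mul_self_eq_one_of_involutive {F : 𝕜 → 𝕜} {F' a : 𝕜}
    (hF : HasDerivAt F F' a) (hfix : F a = a) (hinv : ∀ᶠ z in 𝓝 a, F (F z) = z) :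
    F' * F' = 1 := by
  have hcomp : HasDerivAt (F ∘ F) (F' * F') a := (hfix ▸ hF).comp a hF
  have hid : HasDerivAt (F ∘ F) 1 a := (hasDerivAt_id a).congr_of_eventuallyEq hinv
  exact hcomp.unique hid

theorem HasStrictDerivAt.eventually_eq_self_of_comp_eq [CompleteSpace 𝕜] {H F : 𝕜 → 𝕜}
    {H' a : 𝕜} (hH : HasStrictDerivAt H H' a) (hH' : H' ≠ 0) (hF : Tendsto F (𝓝 a) (𝓝 a))
    (hHF : ∀ᶠ z in 𝓝 a, H (F z) = H z) : ∀ᶠ z in 𝓝 a, F z = z := by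
  set G := hH.localInverse H H' a hH'
  have hleft : ∀ᶠ z in 𝓝 a, G (H z) = z := hH.eventually_left_inverse hH'
  filter_upwards [hHF, hleft, hF.eventually hleft] with z hHFz hGHz hGHFz
  rwa [hHFz, hGHz, eq_comm] at hGHFz

theorem HasStrictDerivAt.eventually_eq_self_of_involutive [CompleteSpace 𝕜] [CharZero 𝕜]
    {F : 𝕜 → 𝕜} {a : 𝕜} (hF : HasStrictDerivAt F 1 a) (hfix : F a = a)
    (hinv : ∀ᶠ z in 𝓝 a, F (F z) = z) : ∀ᶠ z in 𝓝 a, F z = z := by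
  -- `z ↦ z + F z` is invariant under the involution and has derivative `2` at `a`.
  have hH : HasStrictDerivAt (fun z ↦ z + F z) (1 + 1) a := (hasStrictDerivAt_id a).add hF
  have hFa : Tendsto F (𝓝 a) (𝓝 a) := by
    simpa only [hfix] using hF.hasDerivAt.continuousAt.tendsto
  refine hH.eventually_eq_self_of_comp_eq (by norm_num) hFa ?_
  filter_upwards [hinv] with z hz
  rw [hz, add_comm]

/-- An involutive holomorphic map fixing a point has derivative ±1 there,
and derivative +1 forces it to be the identity germ. -/
theorem stmt0 (F : ℂ → ℂ) (z₀ : ℂ) (hF : AnalyticAt ℂ F z₀) (hfix : F z₀ = z₀)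
    (hinv : ∀ᶠ z in nhds z₀, F (F z) = z) :
    (deriv F z₀ = 1 ∨ deriv F z₀ = -1) ∧
      (deriv F z₀ = 1 → ∀ᶠ z in nhds z₀, F z = z) := by
  have hderiv : HasStrictDerivAt F (deriv F z₀) z₀ := hF.hasStrictDerivAt
  exact ⟨mul_self_eq_one_iff.mp (hderiv.hasDerivAt.mul_self_eq_one_of_involutive hfix hinv),
    fun h1 ↦ (h1 ▸ hderiv).eventually_eq_self_of_involutive hfix hinv⟩
end

section
/- Let P, Q : ℂ → ℂ be analytic at z₀ with P(z₀) = Q(z₀), and suppose there is a function F : ℂ → ℂ analytic at z₀ with F(z₀) = z₀ such that P(z) = Q(F(z)) for all z near z₀ and F(F(z)) = z for all z near z₀. Then either P and Q agree on a neighborhood of z₀, or P′(z₀) = −Q′(z₀). -/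
/-!
Differentiating `P = Q ∘ F` and `F ∘ F = id` at the fixed point gives `P'(z₀) = Q'(z₀) F'(z₀)`
and `F'(z₀)² = 1`. If `F'(z₀) = 1`, then `g = F - id` satisfies `g ∘ F = -g`. Were `g` not locally
zero, writing `g z = (z - z₀)ⁿ h z` with `h z₀ ≠ 0` would give `g (F z) / g z → F'(z₀)ⁿ = 1`,
contradicting `g (F z) / g z = -1`. Hence `F = id` near `z₀`, and there `P = Q`.
-/

open Filter Topology

section Involution

variable {𝕜 : Type*} [NontriviallyNormedField 𝕜]

theorem deriv_eq_deriv_mul_deriv_of_eventuallyEq_comp {P Q F : 𝕜 → 𝕜} {z₀ : 𝕜}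
    (hQ : DifferentiableAt 𝕜 Q z₀) (hF : DifferentiableAt 𝕜 F z₀) (hFz₀ : F z₀ = z₀)
    (hcomp : P =ᶠ[𝓝 z₀] Q ∘ F) :
    deriv P z₀ = deriv Q z₀ * deriv F z₀ := by
  rw [hcomp.deriv_eq, deriv_comp z₀ (by rwa [hFz₀]) hF, hFz₀]

theorem deriv_mul_self_eq_one_of_involutive {F : 𝕜 → 𝕜} {z₀ : 𝕜}
    (hF : DifferentiableAt 𝕜 F z₀) (hFz₀ : F z₀ = z₀) (hinv : F ∘ F =ᶠ[𝓝 z₀] id) :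
    deriv F z₀ * deriv F z₀ = 1 := by
  rw [← deriv_eq_deriv_mul_deriv_of_eventuallyEq_comp hF hF hFz₀ hinv.symm, deriv_id]

theorem AnalyticAt.tendsto_comp_div_self {g F : 𝕜 → 𝕜} {z₀ a : 𝕜} (hg : AnalyticAt 𝕜 g z₀)
    (hg_ord : analyticOrderAt g z₀ ≠ ⊤) (hF : HasDerivAt F a z₀) (hFz₀ : F z₀ = z₀) :
    Tendsto (fun z ↦ g (F z) / g z) (𝓝[≠] z₀) (𝓝 (a ^ analyticOrderNatAt g z₀)) := by
  obtain ⟨h, hh, hh₀, hg_eq⟩ := hg.analyticOrderAt_ne_top.mp hg_ord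
  set n := analyticOrderNatAt g z₀
  have hF_tendsto : Tendsto F (𝓝 z₀) (𝓝 z₀) := by
    simpa only [hFz₀] using hF.continuousAt.tendsto
  have hh_tendsto : Tendsto h (𝓝[≠] z₀) (𝓝 (h z₀)) :=
    hh.continuousAt.tendsto.mono_left nhdsWithin_le_nhds
  have hhF_tendsto : Tendsto (h ∘ F) (𝓝[≠] z₀) (𝓝 (h z₀)) :=
    hh.continuousAt.tendsto.comp (hF_tendsto.mono_left nhdsWithin_le_nhds)
  have hlim : Tendsto (fun z ↦ slope F z₀ z ^ n * (h (F z) / h z)) (𝓝[≠] z₀)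
      (𝓝 (a ^ n * (h z₀ / h z₀))) :=
    (hasDerivAt_iff_tendsto_slope.mp hF).pow n |>.mul (hhF_tendsto.div hh_tendsto hh₀)
  rw [div_self hh₀, mul_one] at hlim
  refine hlim.congr' ?_
  filter_upwards [nhdsWithin_le_nhds hg_eq, nhdsWithin_le_nhds (hF_tendsto.eventually hg_eq)]
    with z hgz hgFz
  rw [hgz, hgFz, slope_def_field, hFz₀, smul_eq_mul, smul_eq_mul, div_pow, mul_div_mul_comm]

theorem AnalyticAt.eventuallyEq_id_of_involutive [CharZero 𝕜] {F : 𝕜 → 𝕜} {z₀ : 𝕜}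
    (hF : AnalyticAt 𝕜 F z₀) (hFz₀ : F z₀ = z₀) (hinv : F ∘ F =ᶠ[𝓝 z₀] id)
    (hderiv : deriv F z₀ = 1) : F =ᶠ[𝓝 z₀] id := by
  set g : 𝕜 → 𝕜 := fun z ↦ F z - z
  have hg : AnalyticAt 𝕜 g z₀ := hF.sub analyticAt_id
  suffices ∀ᶠ z in 𝓝 z₀, g z = 0 by
    filter_upwards [this] with z hz
    exact sub_eq_zero.mp hz
  refine hg.eventually_eq_zero_or_eventually_ne_zero.resolve_right fun hg_ne ↦ ?_
  have hg_ord : analyticOrderAt g z₀ ≠ ⊤ := fun htop ↦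
    (hg_ne.and (nhdsWithin_le_nhds (analyticOrderAt_eq_top.mp htop))).exists.elim
      fun z hz ↦ hz.1 hz.2
  have hlim := hg.tendsto_comp_div_self hg_ord (hderiv ▸ hF.differentiableAt.hasDerivAt) hFz₀
  rw [one_pow] at hlim
  have hneg : (fun z ↦ g (F z) / g z) =ᶠ[𝓝[≠] z₀] fun _ ↦ -1 := by
    filter_upwards [hg_ne, nhdsWithin_le_nhds hinv] with z hz hFFz
    simp only [g, Function.comp_apply, id] at hz hFFz ⊢
    rw [hFFz, ← neg_sub, neg_div, div_self hz]
  have : (1 : 𝕜) = -1 := tendsto_nhds_unique_of_eventuallyEq hlim tendsto_const_nhds hneg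
  norm_num at this

end Involution

theorem stmt1_general (P Q F : ℂ → ℂ) (z₀ : ℂ) (hQ : AnalyticAt ℂ Q z₀)
    (hF : AnalyticAt ℂ F z₀) (hFfix : F z₀ = z₀)
    (hcomp : ∀ᶠ z in nhds z₀, P z = Q (F z))
    (hinv : ∀ᶠ z in nhds z₀, F (F z) = z) :
    (∀ᶠ z in nhds z₀, P z = Q z) ∨ deriv P z₀ = -deriv Q z₀ := by
  have hchain := deriv_eq_deriv_mul_deriv_of_eventuallyEq_comp hQ.differentiableAt
    hF.differentiableAt hFfix hcomp
  rcases mul_self_eq_one_iff.mp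
      (deriv_mul_self_eq_one_of_involutive hF.differentiableAt hFfix hinv) with h1 | hneg1
  · left
    filter_upwards [hcomp, hF.eventuallyEq_id_of_involutive hFfix hinv h1] with z hPz hFz
    rw [hPz, hFz, id]
  · right
    rw [hchain, hneg1, mul_neg_one]

/-- If P = Q ∘ F near z₀ with F an involution fixing z₀ and P(z₀) = Q(z₀), then
either P and Q agree near z₀, or P′(z₀) = −Q′(z₀). -/
theorem stmt1 (P Q F : ℂ → ℂ) (z₀ : ℂ) (hP : AnalyticAt ℂ P z₀) (hQ : AnalyticAt ℂ Q z₀)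
    (hF : AnalyticAt ℂ F z₀) (hPQ : P z₀ = Q z₀) (hFfix : F z₀ = z₀)
    (hcomp : ∀ᶠ z in nhds z₀, P z = Q (F z))
    (hinv : ∀ᶠ z in nhds z₀, F (F z) = z) :
    (∀ᶠ z in nhds z₀, P z = Q z) ∨ deriv P z₀ = -deriv Q z₀ :=
  stmt1_general P Q F z₀ hQ hF hFfix hcomp hinv
end

section
/- Let G be a group and a, b ∈ G. Define a sequence s : ℕ → G by s(0) = a, s(1) = b, and s(n+2) = s(n+1)·s(n)⁻¹·s(n+1). Then for all j, k ∈ ℕ, s(j+k) = s(j)·a⁻¹·s(k). -/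
/-! Writing `t = a⁻¹ * b`, the recurrence forces `s n = a * t ^ n`: the iteration is a
geometric progression in the left-translate `a⁻¹ * s n`. The identity is then
`a * t ^ (j + k) = (a * t ^ j) * a⁻¹ * (a * t ^ k)`. -/

section DavisIteration

variable {G : Type*} [Group G] {s : ℕ → G}

theorem davis_succ_eq (hrec : ∀ n, s (n + 2) = s (n + 1) * (s n)⁻¹ * s (n + 1)) (n : ℕ) :
    s (n + 1) = s n * (s 0)⁻¹ * s 1 := by
  induction n with
  | zero => group
  | succ m ih =>
    rw [hrec m, ih]
    group

theorem davis_eq_mul_pow (hrec : ∀ n, s (n + 2) = s (n + 1) * (s n)⁻¹ * s (n + 1)) (n : ℕ) :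
    s n = s 0 * ((s 0)⁻¹ * s 1) ^ n := by
  induction n with
  | zero => group
  | succ m ih =>
    rw [davis_succ_eq hrec m, ih, pow_succ]
    group

theorem davis_add (hrec : ∀ n, s (n + 2) = s (n + 1) * (s n)⁻¹ * s (n + 1)) (j k : ℕ) :
    s (j + k) = s j * (s 0)⁻¹ * s k := by
  rw [davis_eq_mul_pow hrec (j + k), davis_eq_mul_pow hrec j, davis_eq_mul_pow hrec k, pow_add]
  group

end DavisIteration

theorem stmt4_general {G : Type*} [Group G] (a : G) (s : ℕ → G)
    (h0 : s 0 = a)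
    (hrec : ∀ n : ℕ, s (n + 2) = s (n + 1) * (s n)⁻¹ * s (n + 1)) :
    ∀ j k : ℕ, s (j + k) = s j * a⁻¹ * s k := by
  subst h0
  exact davis_add hrec

/-- Davis iteration: s(0) = a, s(1) = b, s(n+2) = s(n+1)·s(n)⁻¹·s(n+1) implies
s(j+k) = s(j)·a⁻¹·s(k) for all j, k ∈ ℕ. -/
theorem stmt4 {G : Type*} [Group G] (a b : G) (s : ℕ → G)
    (h0 : s 0 = a) (h1 : s 1 = b)
    (hrec : ∀ n : ℕ, s (n + 2) = s (n + 1) * (s n)⁻¹ * s (n + 1)) :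
    ∀ j k : ℕ, s (j + k) = s j * a⁻¹ * s k :=
  stmt4_general a s h0 hrec
end

section
/- Let U ⊆ ℂ be open, S : ℝ → ℂ → ℂ, and T : ℂ → ℂ. Assume: (a) S(t+u, z) = S(t, T(S(u, z))) for all t, u ∈ ℝ and z ∈ U; (b) T(S(0, z)) = z for all z ∈ U; (c) for each t, the map z ↦ S(t, z) is holomorphic on an open set containing all relevant points, T is holomorphic near S(0, z) for z ∈ U, and for each z the map t ↦ S(t, z) is differentiable. Then for all t ∈ ℝ and z ∈ U, the partial derivatives satisfy ∂ₜS(t, z)·∂_zS(0, z) = ∂ₜS(0, z)·∂_zS(t, z). -/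
/-!
Differentiating `S (t + u) z = S t (T (S u z))` in `u` at `u = 0` gives
`∂ₜS(t,z) = S_t'(z) · T'(S₀ z) · ∂ₜS(0,z)`, and `T'(S₀ z) · S₀'(z) = 1` because `T ∘ S₀ = id`
near `z`.
-/

open Filter Topology

theorem deriv_mul_deriv_eq_one_of_eventually_leftInverse {𝕜 : Type*} [NontriviallyNormedField 𝕜]
    {f g : 𝕜 → 𝕜} {x : 𝕜} (hg : DifferentiableAt 𝕜 g (f x)) (hf : DifferentiableAt 𝕜 f x)
    (hinv : ∀ᶠ y in 𝓝 x, g (f y) = y) : deriv g (f x) * deriv f x = 1 := by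
  have hid : HasDerivAt id (deriv g (f x) * deriv f x) x :=
    (hg.hasDerivAt.comp x hf.hasDerivAt).congr_of_eventuallyEq (hinv.mono fun _ h => h.symm)
  exact hid.unique (hasDerivAt_id x)

/-- The derivative of `u ↦ S u z` at `t` is read off from the right-hand side alone, so no
differentiability in the parameter at `t` is required. -/
theorem deriv_param_eq_mul_of_add_eq_comp {𝕜 𝕜' : Type*} [NontriviallyNormedField 𝕜]
    [NontriviallyNormedField 𝕜'] [NormedAlgebra 𝕜 𝕜'] {S : 𝕜 → 𝕜' → 𝕜'} {c : 𝕜 → 𝕜'}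
    {c' : 𝕜'} {t : 𝕜} {z : 𝕜'} (hadd : ∀ u, S (t + u) z = S t (c u)) (hc0 : c 0 = z)
    (hc : HasDerivAt c c' 0) (hS : DifferentiableAt 𝕜' (S t) z) :
    deriv (fun u => S u z) t = deriv (S t) z * c' := by
  have hshift : HasDerivAt (fun u => S (t + u) z) (deriv (S t) z * c') 0 := by
    simp_rw [hadd]
    subst hc0
    exact hS.hasDerivAt.comp 0 hc
  simpa using (deriv_comp_const_add (fun u => S u z) t 0).symm.trans hshift.deriv

/-- The first-order linear PDE of continuous Schwarzian reflection:
differentiating S(t+u, z) = S(t, T(S(u, z))) in u at u = 0, using T ∘ S₀ = id, yields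
∂ₜS(t,z)·∂_zS(0,z) = ∂ₜS(0,z)·∂_zS(t,z). -/
theorem stmt5 (U : Set ℂ) (hU : IsOpen U) (S : ℝ → ℂ → ℂ) (T : ℂ → ℂ)
    (hgroup : ∀ t u : ℝ, ∀ z ∈ U, S (t + u) z = S t (T (S u z)))
    (hTinv : ∀ z ∈ U, T (S 0 z) = z)
    (hShol : ∀ t : ℝ, ∀ z ∈ U, AnalyticAt ℂ (S t) z)
    (hThol : ∀ z ∈ U, AnalyticAt ℂ T (S 0 z))
    (hSt : ∀ z ∈ U, ∀ t : ℝ, DifferentiableAt ℝ (fun u => S u z) t) :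
    ∀ t : ℝ, ∀ z ∈ U,
      deriv (fun u => S u z) t * deriv (S 0) z =
        deriv (fun u => S u z) 0 * deriv (S t) z := by
  intro t z hz
  have hinv : deriv T (S 0 z) * deriv (S 0) z = 1 :=
    deriv_mul_deriv_eq_one_of_eventually_leftInverse (hThol z hz).differentiableAt
      (hShol 0 z hz).differentiableAt (eventually_of_mem (hU.mem_nhds hz) hTinv)
  have hflow : deriv (fun u => S u z) t =
      deriv (S t) z * (deriv T (S 0 z) * deriv (fun u => S u z) 0) :=
    deriv_param_eq_mul_of_add_eq_comp (fun u => hgroup t u z hz) (hTinv z hz)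
      ((hThol z hz).differentiableAt.hasDerivAt.comp 0 (hSt z hz 0).hasDerivAt)
      (hShol t z hz).differentiableAt
  rw [hflow]
  linear_combination deriv (S t) z * deriv (fun u => S u z) 0 * hinv
end

section
/- Let S : ℝ → ℂ → ℂ satisfy the one-parameter group law S(t+u, z) = S(t, S(u, z)) with S(0, z) = z, together with the symmetry S(−t, z) = conj(S(t, conj(z))) for all t ∈ ℝ and z in the domain. Define γ(t, x) = S(−t/2, x) for real x. Then: (i) for all t and all real x, S(t, γ(t, x)) = conj(γ(t, x)), so the point γ(t,x) lies on the curve Γₜ = { z : conj(z) = S(t, z) }; and (ii) if moreover ∂ₜS(t, z) = −2i·v(S(t, z)) for some function v, then ∂ₜγ(t, x) = i·v(γ(t, x)). -/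
open ComplexConjugate

section Flow

variable {S : ℝ → ℂ → ℂ}

theorem conj_flow_apply_of_conj_eq (hsym : ∀ t z, S (-t) z = conj (S t (conj z))) (t : ℝ)
    {z : ℂ} (hz : conj z = z) : conj (S t z) = S (-t) z := by
  rw [hsym, hz]

theorem flow_flow_neg_half_eq_conj (hgroup : ∀ t u z, S (t + u) z = S t (S u z))
    (hsym : ∀ t z, S (-t) z = conj (S t (conj z))) (t : ℝ) {z : ℂ} (hz : conj z = z) :
    S t (S (-t / 2) z) = conj (S (-t / 2) z) :=
  calc S t (S (-t / 2) z) = S (t / 2) z := by rw [← hgroup]; ring_nf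
    _ = conj (S (-t / 2) z) := by rw [neg_div, conj_flow_apply_of_conj_eq hsym _ hz, neg_neg]

theorem hasDerivAt_flow_neg_half {v : ℂ → ℂ}
    (hder : ∀ t z, HasDerivAt (fun u => S u z) (-2 * Complex.I * v (S t z)) t) (t : ℝ) (z : ℂ) :
    HasDerivAt (fun u => S (-u / 2) z) (Complex.I * v (S (-t / 2) z)) t := by
  have hscale : HasDerivAt (fun u : ℝ => -u / 2) (-1 / 2) t := by
    simpa using (hasDerivAt_id t).neg.div_const 2
  refine ((hder (-t / 2) z).scomp t hscale).congr_deriv ?_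
  rw [Complex.real_smul]
  push_cast
  ring

end Flow

theorem stmt7_general (S : ℝ → ℂ → ℂ) (v : ℂ → ℂ)
    (hgroup : ∀ t u : ℝ, ∀ z : ℂ, S (t + u) z = S t (S u z))
    (hsym : ∀ t : ℝ, ∀ z : ℂ, S (-t) z = starRingEnd ℂ (S t (starRingEnd ℂ z)))
    (γ : ℝ → ℝ → ℂ) (hγ : ∀ t x : ℝ, γ t x = S (-t / 2) (x : ℂ)) :
    (∀ t x : ℝ, S t (γ t x) = starRingEnd ℂ (γ t x)) ∧
      ((∀ t : ℝ, ∀ z : ℂ, HasDerivAt (fun u => S u z) (-2 * Complex.I * v (S t z)) t) →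
        ∀ t x : ℝ, HasDerivAt (fun u => γ u x) (Complex.I * v (γ t x)) t) := by
  refine ⟨fun t x => ?_, fun hder t x => ?_⟩
  · rw [hγ]
    exact flow_flow_neg_half_eq_conj hgroup hsym t (Complex.conj_ofReal x)
  · rw [show (fun u => γ u x) = fun u => S (-u / 2) (x : ℂ) from funext (hγ · x), hγ]
    exact hasDerivAt_flow_neg_half hder t x

/-- Canonical parametrization: γ(t,x) = S(−t/2, x) lies on the curve Γₜ = {z : conj z = S(t,z)},
and if ∂ₜS(t,z) = −2i·v(S(t,z)) then ∂ₜγ(t,x) = i·v(γ(t,x)). -/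
theorem stmt7 (S : ℝ → ℂ → ℂ) (v : ℂ → ℂ)
    (hgroup : ∀ t u : ℝ, ∀ z : ℂ, S (t + u) z = S t (S u z))
    (hid : ∀ z : ℂ, S 0 z = z)
    (hsym : ∀ t : ℝ, ∀ z : ℂ, S (-t) z = starRingEnd ℂ (S t (starRingEnd ℂ z)))
    (γ : ℝ → ℝ → ℂ) (hγ : ∀ t x : ℝ, γ t x = S (-t / 2) (x : ℂ)) :
    (∀ t x : ℝ, S t (γ t x) = starRingEnd ℂ (γ t x)) ∧
      ((∀ t : ℝ, ∀ z : ℂ, HasDerivAt (fun u => S u z) (-2 * Complex.I * v (S t z)) t) →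
        ∀ t x : ℝ, HasDerivAt (fun u => γ u x) (Complex.I * v (γ t x)) t) :=
  stmt7_general S v hgroup hsym γ hγ
end

section
/- Let v : ℂ → ℂ be analytic on a neighborhood of a real point x₀ with v(x₀) = 0, and let S : ℝ × ℂ → ℂ be jointly analytic near ℝ × {x₀} (so that mixed partial derivatives commute), satisfying ∂ₜS(t, z) = −2i·v(z)·∂_zS(t, z) and S(0, z) = z. Then for all t ∈ ℝ: (i) S(t, x₀) = x₀ (x₀ is a stationary point lying on every curve Γₜ); and (ii) ∂_zS(t, x₀) = exp(−2i·v′(x₀)·t). In particular, the tangent line to Γₜ at the stationary point x₀ rotates at the constant rate dθ/dt = v′(x₀). -/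
/-!
Since `v x₀ = 0`, the evolution equation at `z = x₀` says `∂ₜ S(t, x₀) = 0`, so `S(t, x₀) = S(0, x₀) = x₀`.
Differentiating the equation in `z` at `x₀` (where the term `v · ∂_z²S` drops out, again because
`v x₀ = 0`) gives the linear ODE `σ' = -2i v'(x₀) σ` for `σ t = ∂_z S(t, x₀)`, with `σ 0 = 1`;
its unique solution is the exponential.
-/

open Complex

theorem HasDerivAt.mul_of_eq_zero {𝕜 : Type*} [NontriviallyNormedField 𝕜] {f g : 𝕜 → 𝕜}
    {f' x : 𝕜} (hf : HasDerivAt f f' x) (hfx : f x = 0) (hg : DifferentiableAt 𝕜 g x) :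
    HasDerivAt (fun z => f z * g z) (f' * g x) x := by
  refine (hf.mul hg.hasDerivAt).congr_deriv ?_
  simp [hfx]

theorem eq_exp_smul_of_hasDerivAt_smul {E : Type*} [NormedAddCommGroup E] [NormedSpace ℂ E]
    {f : ℝ → E} {c : ℂ} (hf : ∀ t, HasDerivAt f (c • f t) t) (t : ℝ) :
    f t = exp (c * t) • f 0 := by
  have hexp : ∀ u : ℝ, HasDerivAt (fun u : ℝ => exp (-(c * u))) (-c * exp (-(c * u))) u := by
    intro u
    simpa [mul_comm] using ((ofRealCLM.hasDerivAt (x := u)).const_mul c).neg.cexp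
  have hconst : ∀ u : ℝ, HasDerivAt (fun u : ℝ => exp (-(c * u)) • f u) 0 u := by
    intro u
    refine ((hexp u).smul (hf u)).congr_deriv ?_
    rw [smul_smul, ← add_smul, neg_mul, mul_comm, add_neg_cancel, zero_smul]
  have hvalue := is_const_of_deriv_eq_zero (fun u => (hconst u).differentiableAt)
    (fun u => (hconst u).deriv) t 0
  simp only [ofReal_zero, mul_zero, neg_zero, exp_zero, one_smul] at hvalue
  rw [← hvalue, smul_smul, ← exp_add, add_neg_cancel, exp_zero, one_smul]

theorem stmt8_general (x₀ : ℝ) (v : ℂ → ℂ) (S : ℝ → ℂ → ℂ) (U : Set ℂ)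
    (hx₀ : (x₀ : ℂ) ∈ U)
    (hv : AnalyticAt ℂ v (x₀ : ℂ)) (hv0 : v (x₀ : ℂ) = 0)
    (hanal : ∀ t : ℝ, AnalyticAt ℂ (S t) (x₀ : ℂ))
    (hPDE : ∀ t : ℝ, ∀ z ∈ U,
      HasDerivAt (fun u => S u z) (-2 * Complex.I * v z * deriv (S t) z) t)
    (hmix : ∀ t : ℝ, HasDerivAt (fun u => deriv (S u) (x₀ : ℂ))
      (deriv (fun z => -2 * Complex.I * v z * deriv (S t) z) (x₀ : ℂ)) t)
    (hid : ∀ z : ℂ, S 0 z = z) :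
    ∀ t : ℝ, S t (x₀ : ℂ) = (x₀ : ℂ) ∧
      deriv (S t) (x₀ : ℂ) = Complex.exp (-2 * Complex.I * deriv v (x₀ : ℂ) * t) := by
  have hstationary : ∀ t : ℝ, HasDerivAt (fun u => S u x₀) 0 t := by
    simpa [hv0] using fun t => hPDE t _ hx₀
  have hclinant : ∀ t : ℝ, HasDerivAt (fun u => deriv (S u) x₀)
      ((-2 * I * deriv v x₀) • deriv (S t) x₀) t := by
    intro t
    have hcoeff : HasDerivAt (fun z => -2 * I * v z) (-2 * I * deriv v x₀) x₀ :=
      hv.differentiableAt.hasDerivAt.const_mul _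
    rw [smul_eq_mul, ← ((hcoeff.mul_of_eq_zero (by simp [hv0])
      (hanal t).deriv.differentiableAt)).deriv]
    exact hmix t
  have hS0 : S 0 = id := funext hid
  intro t
  refine ⟨?_, ?_⟩
  · simpa [hid] using is_const_of_deriv_eq_zero (fun u => (hstationary u).differentiableAt)
      (fun u => (hstationary u).deriv) t 0
  · simpa [hS0] using eq_exp_smul_of_hasDerivAt_smul hclinant t

/-- Stationary point with rotating tangent: if v(x₀) = 0 then x₀ is fixed by every S t,
and the clinant satisfies ∂_zS(t, x₀) = exp(−2i·v′(x₀)·t), so the tangent line to Γₜ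
rotates at constant rate v′(x₀). -/
theorem stmt8 (x₀ : ℝ) (v : ℂ → ℂ) (S : ℝ → ℂ → ℂ) (U : Set ℂ)
    (hU : IsOpen U) (hx₀ : (x₀ : ℂ) ∈ U)
    (hv : AnalyticAt ℂ v (x₀ : ℂ)) (hv0 : v (x₀ : ℂ) = 0)
    (hanal : ∀ t : ℝ, AnalyticAt ℂ (S t) (x₀ : ℂ))
    (hPDE : ∀ t : ℝ, ∀ z ∈ U,
      HasDerivAt (fun u => S u z) (-2 * Complex.I * v z * deriv (S t) z) t)
    (hmix : ∀ t : ℝ, HasDerivAt (fun u => deriv (S u) (x₀ : ℂ))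
      (deriv (fun z => -2 * Complex.I * v z * deriv (S t) z) (x₀ : ℂ)) t)
    (hid : ∀ z : ℂ, S 0 z = z) :
    ∀ t : ℝ, S t (x₀ : ℂ) = (x₀ : ℂ) ∧
      deriv (S t) (x₀ : ℂ) = Complex.exp (-2 * Complex.I * deriv v (x₀ : ℂ) * t) :=
  stmt8_general x₀ v S U hx₀ hv hv0 hanal hPDE hmix hid
end

section
/- Let v : ℂ → ℂ be analytic on a neighborhood of a real point x₀ with v(x₀) = 0 and v′(x₀) = 0, and let S : ℝ × ℂ → ℂ be jointly analytic near ℝ × {x₀} (so mixed partial derivatives commute), satisfying ∂ₜS(t, z) = −2i·v(z)·∂_zS(t, z) and S(0, z) = z. Then for all t ∈ ℝ: (i) ∂_zS(t, x₀) = 1 (Γₜ remains tangent to the real axis at x₀); and (ii) ∂_z²S(t, x₀) = −2i·t·v″(x₀), so that the signed curvature κ(t, x₀) = (i/2)·∂_z²S(t,x₀)/(∂_zS(t,x₀))^{3/2} = t·v″(x₀) changes at the constant rate v″(x₀). -/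
/-!
Since `v` vanishes to second order at `x₀`, the product rule kills every term of
`∂_z (v · S_z)` and of `∂_z² (v · S_z)` at `x₀` except `v″(x₀) · S_z(t, x₀)`. By the
`z`-differentiated evolution equation, `t ↦ S_z(t, x₀)` therefore has derivative zero and keeps
its initial value `1`; then `t ↦ S_zz(t, x₀)` has constant derivative `-2i v″(x₀)` and initial
value `0`, hence is linear in `t`.
-/

open Filter Topology

section SecondOrderZero

variable {𝕜 : Type*} [NontriviallyNormedField 𝕜] {v g : 𝕜 → 𝕜} {x : 𝕜}

theorem deriv_mul_eq_zero_of_eq_zero_of_deriv_eq_zero (hv : DifferentiableAt 𝕜 v x)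
    (hg : DifferentiableAt 𝕜 g x) (hv0 : v x = 0) (hv1 : deriv v x = 0) :
    deriv (fun z => v z * g z) x = 0 := by
  rw [deriv_fun_mul hv hg, hv0, hv1]; ring

theorem deriv_deriv_mul_of_eq_zero_of_deriv_eq_zero [CompleteSpace 𝕜] (hv : AnalyticAt 𝕜 v x)
    (hg : AnalyticAt 𝕜 g x) (hv0 : v x = 0) (hv1 : deriv v x = 0) :
    deriv (deriv fun z => v z * g z) x = deriv (deriv v) x * g x := by
  have hderiv : deriv (fun z => v z * g z)
      =ᶠ[𝓝 x] fun z => deriv v z * g z + v z * deriv g z := by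
    filter_upwards [hv.eventually_analyticAt, hg.eventually_analyticAt] with z hvz hgz
    exact deriv_fun_mul hvz.differentiableAt hgz.differentiableAt
  have hsecond :=
    (hv.deriv.differentiableAt.hasDerivAt.fun_mul hg.differentiableAt.hasDerivAt).fun_add
      (hv.differentiableAt.hasDerivAt.fun_mul hg.deriv.differentiableAt.hasDerivAt)
  rw [hderiv.deriv_eq, hsecond.deriv, hv0, hv1]; ring

end SecondOrderZero

theorem eq_add_smul_of_forall_hasDerivAt {E : Type*} [NormedAddCommGroup E] [NormedSpace ℝ E]
    {f : ℝ → E} {c : E} (hf : ∀ t, HasDerivAt f c t) (t : ℝ) : f t = f 0 + t • c := by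
  have hconst : ∀ u, HasDerivAt (fun u => f u - u • c) 0 u := fun u => by
    simpa using (hf u).fun_sub ((hasDerivAt_id u).smul_const c)
  have := is_const_of_deriv_eq_zero (fun u => (hconst u).differentiableAt)
    (fun u => (hconst u).deriv) t 0
  simp only [zero_smul, sub_zero] at this
  rw [← this]; abel

theorem stmt9_general (x₀ : ℝ) (v : ℂ → ℂ) (S : ℝ → ℂ → ℂ)
    (hv : AnalyticAt ℂ v (x₀ : ℂ)) (hv0 : v (x₀ : ℂ) = 0) (hv1 : deriv v (x₀ : ℂ) = 0)
    (hanal : ∀ t : ℝ, AnalyticAt ℂ (S t) (x₀ : ℂ))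
    (hmix : ∀ t : ℝ, HasDerivAt (fun u => deriv (S u) (x₀ : ℂ))
      (deriv (fun z => -2 * Complex.I * v z * deriv (S t) z) (x₀ : ℂ)) t)
    (hmix2 : ∀ t : ℝ, HasDerivAt (fun u => deriv (deriv (S u)) (x₀ : ℂ))
      (deriv (deriv (fun z => -2 * Complex.I * v z * deriv (S t) z)) (x₀ : ℂ)) t)
    (hid : ∀ z : ℂ, S 0 z = z) :
    ∀ t : ℝ, deriv (S t) (x₀ : ℂ) = 1 ∧
      deriv (deriv (S t)) (x₀ : ℂ) = -2 * Complex.I * t * deriv (deriv v) (x₀ : ℂ) ∧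
      Complex.I / 2 * deriv (deriv (S t)) (x₀ : ℂ) = t * deriv (deriv v) (x₀ : ℂ) := by
  have hS0 : S 0 = id := funext hid
  have hw : AnalyticAt ℂ (fun z => -2 * Complex.I * v z) x₀ := by fun_prop
  have hw0 : -2 * Complex.I * v x₀ = 0 := by rw [hv0, mul_zero]
  have hw1 : deriv (fun z => -2 * Complex.I * v z) x₀ = 0 := by
    simp only [deriv_const_mul_field', hv1, mul_zero]
  have hw2 : deriv (deriv fun z => -2 * Complex.I * v z) x₀ =
      -2 * Complex.I * deriv (deriv v) x₀ := by
    simp only [deriv_const_mul_field']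
  have htangent : ∀ t : ℝ, deriv (S t) x₀ = 1 := fun t => by
    have hzero : ∀ u : ℝ, HasDerivAt (fun u => deriv (S u) (x₀ : ℂ)) 0 u := fun u => by
      simpa only [deriv_mul_eq_zero_of_eq_zero_of_deriv_eq_zero hw.differentiableAt
        (hanal u).deriv.differentiableAt hw0 hw1] using hmix u
    simpa [hS0] using eq_add_smul_of_forall_hasDerivAt hzero t
  have hsecond : ∀ t : ℝ, deriv (deriv (S t)) x₀ = -2 * Complex.I * t * deriv (deriv v) x₀ :=
      fun t => by
    have hrate : ∀ u : ℝ, HasDerivAt (fun u => deriv (deriv (S u)) (x₀ : ℂ))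
        (-2 * Complex.I * deriv (deriv v) x₀) u := fun u => by
      simpa only [deriv_deriv_mul_of_eq_zero_of_deriv_eq_zero hw (hanal u).deriv hw0 hw1, hw2,
        htangent u, mul_one] using hmix2 u
    rw [eq_add_smul_of_forall_hasDerivAt hrate t, hS0]
    simp only [deriv_id', deriv_const', neg_mul, smul_neg, Complex.real_smul, zero_add, neg_inj]
    ring
  intro t
  refine ⟨htangent t, hsecond t, ?_⟩
  rw [hsecond t]
  linear_combination (-(t * deriv (deriv v) (x₀ : ℂ))) * Complex.I_mul_I

/-- Point of tangency: if v(x₀) = v′(x₀) = 0 then ∂_zS(t,x₀) = 1 and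
∂_z²S(t,x₀) = −2i·t·v″(x₀), so the curvature κ = (i/2)·S_zz changes at rate v″(x₀). -/
theorem stmt9 (x₀ : ℝ) (v : ℂ → ℂ) (S : ℝ → ℂ → ℂ) (U : Set ℂ)
    (hU : IsOpen U) (hx₀ : (x₀ : ℂ) ∈ U)
    (hv : AnalyticAt ℂ v (x₀ : ℂ)) (hv0 : v (x₀ : ℂ) = 0) (hv1 : deriv v (x₀ : ℂ) = 0)
    (hanal : ∀ t : ℝ, AnalyticAt ℂ (S t) (x₀ : ℂ))
    (hPDE : ∀ t : ℝ, ∀ z ∈ U,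
      HasDerivAt (fun u => S u z) (-2 * Complex.I * v z * deriv (S t) z) t)
    (hmix : ∀ t : ℝ, HasDerivAt (fun u => deriv (S u) (x₀ : ℂ))
      (deriv (fun z => -2 * Complex.I * v z * deriv (S t) z) (x₀ : ℂ)) t)
    (hmix2 : ∀ t : ℝ, HasDerivAt (fun u => deriv (deriv (S u)) (x₀ : ℂ))
      (deriv (deriv (fun z => -2 * Complex.I * v z * deriv (S t) z)) (x₀ : ℂ)) t)
    (hid : ∀ z : ℂ, S 0 z = z) :
    ∀ t : ℝ, deriv (S t) (x₀ : ℂ) = 1 ∧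
      deriv (deriv (S t)) (x₀ : ℂ) = -2 * Complex.I * t * deriv (deriv v) (x₀ : ℂ) ∧
      Complex.I / 2 * deriv (deriv (S t)) (x₀ : ℂ) = t * deriv (deriv v) (x₀ : ℂ) :=
  stmt9_general x₀ v S hv hv0 hv1 hanal hmix hmix2 hid
end

section
/- Let γ : ℝ → ℂ be differentiable at x with γ′(x) ≠ 0, and let S : ℂ → ℂ be complex-differentiable at γ(x), with conj(γ(y)) = S(γ(y)) for all y in a neighborhood of x. Then S′(γ(x)) = conj(γ′(x))/γ′(x); in particular |S′(γ(x))| = 1, and writing γ′(x) = μ·e^{iθ} with μ > 0, one has S′(γ(x)) = e^{−2iθ}. -/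
open Complex ComplexConjugate Filter Topology

theorem HasDerivAt.mul_eq_conj_of_conj_eventuallyEq_comp {γ : ℝ → ℂ} {S : ℂ → ℂ} {x : ℝ}
    {g s : ℂ} (hγ : HasDerivAt γ g x) (hS : HasDerivAt S s (γ x))
    (heq : ∀ᶠ y in 𝓝 x, conj (γ y) = S (γ y)) : s * g = conj g :=
  (hS.comp x hγ).unique <| hγ.star.congr_of_eventuallyEq (heq.mono fun _ hy => hy.symm)

theorem Complex.norm_conj_div_self {g : ℂ} (hg : g ≠ 0) : ‖conj g / g‖ = 1 := by
  rw [norm_div, norm_conj, div_self (norm_ne_zero_iff.mpr hg)]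

theorem Complex.conj_div_self_ofReal_mul_exp {μ : ℝ} (hμ : μ ≠ 0) (θ : ℝ) :
    conj (μ * exp (I * θ)) / (μ * exp (I * θ)) = exp (-2 * I * θ) := by
  rw [map_mul, conj_ofReal, ← exp_conj, mul_div_mul_left _ _ (ofReal_ne_zero.mpr hμ),
    ← exp_sub, map_mul, conj_I, conj_ofReal]
  ring_nf

/-- The clinant: if conj(γ(y)) = S(γ(y)) near x and γ′(x) = g ≠ 0, with S′(γ(x)) = s, then
s = conj(g)/g, |s| = 1, and g = μ·e^{iθ} (μ > 0) gives s = e^{−2iθ}. -/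
theorem stmt10 (γ : ℝ → ℂ) (S : ℂ → ℂ) (x : ℝ) (g s : ℂ)
    (hγ : HasDerivAt γ g x) (hg : g ≠ 0)
    (hS : HasDerivAt S s (γ x))
    (heq : ∀ᶠ y in nhds x, starRingEnd ℂ (γ y) = S (γ y)) :
    s = starRingEnd ℂ g / g ∧ ‖s‖ = 1 ∧
      ∀ μ θ : ℝ, 0 < μ → g = (μ : ℂ) * Complex.exp (Complex.I * θ) →
        s = Complex.exp (-2 * Complex.I * θ) := by
  have hs : s = conj g / g := eq_div_of_mul_eq hg (hγ.mul_eq_conj_of_conj_eventuallyEq_comp hS heq)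
  refine ⟨hs, hs ▸ norm_conj_div_self hg, fun μ θ hμ hgμ => ?_⟩
  rw [hs, hgμ, conj_div_self_ofReal_mul_exp hμ.ne']
end

section
/- Let f : U → ℂ be holomorphic on an open set U ⊆ ℂ and let c ∈ ℝ. Define w(t, x) = f(x + i·c·t) for (t, x) ∈ ℝ² with x + i·c·t ∈ U. Then, with subscripts denoting partial derivatives and bars complex conjugation, w satisfies at every such point: (i) wₜ·conj(wₓ) + conj(wₜ)·wₓ = 0 (normal motion), and (ii) Im[ conj(wₓ)·( |wₓ|²·wₜₜ + |wₜ|²·wₓₓ ) ] = 0. -/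
/-!
Along a line `γ(s) = p + s v` the chain rule gives `(f ∘ γ)' = f' v` and `(f ∘ γ)'' = f'' v²`.
For `w(t, x) = f(x + i c t)` this means `wₜ = i c wₓ` and `wₜₜ = -c² wₓₓ`. Since `i c` is purely
imaginary, `wₜ w̄ₓ` is purely imaginary, and `|wₓ|² wₜₜ + |wₜ|² wₓₓ = |wₓ|² (-c² + c²) wₓₓ`
vanishes identically.
-/

open Complex ComplexConjugate Filter Topology

section RealLine

variable {g : ℂ → ℂ} {U : Set ℂ} {p v : ℂ} {s : ℝ}

theorem hasDerivAt_comp_ofReal_line (hg : DifferentiableAt ℂ g (p + s * v)) :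
    HasDerivAt (fun r : ℝ => g (p + r * v)) (deriv g (p + s * v) * v) s := by
  have hline : HasDerivAt (fun r : ℝ => p + (r : ℂ) * v) v s := by
    simpa using ((hasDerivAt_id s).ofReal_comp.mul_const v).const_add p
  exact hg.hasDerivAt.comp s hline

theorem deriv_comp_ofReal_line (hg : DifferentiableAt ℂ g (p + s * v)) :
    deriv (fun r : ℝ => g (p + r * v)) s = deriv g (p + s * v) * v :=
  (hasDerivAt_comp_ofReal_line hg).deriv

theorem deriv_deriv_comp_ofReal_line (hU : IsOpen U) (hg : DifferentiableOn ℂ g U)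
    (hs : p + s * v ∈ U) :
    deriv (deriv fun r : ℝ => g (p + r * v)) s = deriv (deriv g) (p + s * v) * v ^ 2 := by
  have hline : Continuous fun r : ℝ => p + (r : ℂ) * v := by fun_prop
  have hderiv : deriv (fun r : ℝ => g (p + r * v)) =ᶠ[𝓝 s] fun r => deriv g (p + r * v) * v := by
    filter_upwards [(hU.preimage hline).mem_nhds hs] with r hr
    exact deriv_comp_ofReal_line (hg.differentiableAt (hU.mem_nhds hr))
  have hg' : DifferentiableAt ℂ (deriv g) (p + s * v) :=
    (hg.deriv hU).differentiableAt (hU.mem_nhds hs)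
  rw [hderiv.deriv_eq, ((hasDerivAt_comp_ofReal_line hg').mul_const v).deriv]
  ring

end RealLine

section PurelyImaginary

variable {a b v : ℂ}

theorem mul_conj_add_conj_mul_eq_zero_of_re_eq_zero (hv : v.re = 0) :
    a * v * conj a + conj (a * v) * a = 0 := by
  have hconj : conj v = -v := by
    apply Complex.ext <;> simp [hv]
  rw [map_mul, hconj]
  ring

theorem norm_sq_mul_add_norm_sq_mul_eq_zero_of_re_eq_zero (hv : v.re = 0) :
    (‖a‖ : ℂ) ^ 2 * (b * v ^ 2) + (‖a * v‖ : ℂ) ^ 2 * b = 0 := by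
  have hsq : v ^ 2 = -(‖v‖ : ℂ) ^ 2 := by
    rw [← ofReal_pow, Complex.sq_norm, normSq_apply, hv]
    apply Complex.ext <;> simp [sq, hv]
  rw [norm_mul, ofReal_mul, hsq]
  ring

end PurelyImaginary

/-- Any holomorphic f gives a geodesic: w(t,x) = f(x + ict) satisfies the normal-motion
condition wₜw̄ₓ + w̄ₜwₓ = 0 and Im[w̄ₓ(|wₓ|²wₜₜ + |wₜ|²wₓₓ)] = 0. -/
theorem stmt12 (U : Set ℂ) (hU : IsOpen U) (f : ℂ → ℂ) (hf : DifferentiableOn ℂ f U)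
    (c : ℝ) (w : ℝ → ℝ → ℂ)
    (hw : ∀ t x : ℝ, w t x = f ((x : ℂ) + Complex.I * c * t)) :
    ∀ t x : ℝ, ((x : ℂ) + Complex.I * c * t) ∈ U →
      (deriv (fun s => w s x) t * starRingEnd ℂ (deriv (w t) x) +
          starRingEnd ℂ (deriv (fun s => w s x) t) * deriv (w t) x = 0) ∧
        (starRingEnd ℂ (deriv (w t) x) *
            ((‖deriv (w t) x‖ : ℂ) ^ 2 *
                deriv (fun s => deriv (fun u => w u x) s) t +
              (‖deriv (fun s => w s x) t‖ : ℂ) ^ 2 *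
                deriv (fun y => deriv (w t) y) x)).im = 0 := by
  intro t x hz
  have hre : (Complex.I * c).re = 0 := by simp
  have htime : (fun s => w s x) = fun s : ℝ => f (x + s * (Complex.I * c)) := by
    funext s; rw [hw]; ring_nf
  have hspace : w t = fun y : ℝ => f (Complex.I * c * t + y * 1) := by
    funext y; rw [hw]; ring_nf
  have hpt : (x : ℂ) + t * (Complex.I * c) = x + Complex.I * c * t := by ring
  have hpx : Complex.I * c * t + x * 1 = x + Complex.I * c * t := by ring
  have hfz := hf.differentiableAt (hU.mem_nhds hz)
  have hwt : deriv (fun s => w s x) t = deriv f (x + Complex.I * c * t) * (Complex.I * c) := by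
    rw [htime, deriv_comp_ofReal_line (hpt ▸ hfz), hpt]
  have hwx : deriv (w t) x = deriv f (x + Complex.I * c * t) := by
    rw [hspace, deriv_comp_ofReal_line (hpx ▸ hfz), hpx, mul_one]
  have hwtt : deriv (fun s => deriv (fun u => w u x) s) t =
      deriv (deriv f) (x + Complex.I * c * t) * (Complex.I * c) ^ 2 := by
    rw [htime, deriv_deriv_comp_ofReal_line hU hf (hpt ▸ hz), hpt]
  have hwxx : deriv (fun y => deriv (w t) y) x = deriv (deriv f) (x + Complex.I * c * t) := by
    rw [hspace, deriv_deriv_comp_ofReal_line hU hf (hpx ▸ hz), hpx, one_pow, mul_one]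
  rw [hwt, hwx, hwtt, hwxx, norm_sq_mul_add_norm_sq_mul_eq_zero_of_re_eq_zero hre]
  exact ⟨mul_conj_add_conj_mul_eq_zero_of_re_eq_zero hre, by simp⟩
end

section
/- Let w : ℝ² → ℂ be twice continuously differentiable, and let φ be holomorphic on an open set containing the image of w. Define w_φ(t, x) = φ(w(t, x)). Then Im[Q[w_φ]](t,x) = |φ′(w(t,x))|⁴ · Im[Q[w]](t,x) at every point, where Q is the quartic second-order operator defined below. -/
/-! The chain rule for a holomorphic `φ` turns the jet `(wₓ, wₜ, wₓₓ, wₜₜ, wₓₜ)` of `w` into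
`(A wₓ, A wₜ, B wₓ² + A wₓₓ, B wₜ² + A wₜₜ, B wₓ wₜ + A wₓₜ)` with `A = φ'(w)`, `B = φ''(w)`.
Substituting into `Q`, the terms without `B` pick up the factor `A² Ā² = |A|⁴`, and the terms
containing `B` add up to `R + R̄` for some `R`, so they do not contribute to the imaginary part. -/

/-- The quartic second-order operator
Q[w] = wₓ·w̄ₓ²·wₜₜ + (wₓ·w̄ₓ·wₜ + wₓ²·w̄ₜ)·w̄ₓₜ + w̄ₓ·wₜ·w̄ₜ·wₓₓ. -/
noncomputable def Qop (w : ℝ → ℝ → ℂ) (t x : ℝ) : ℂ :=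
  let wx := deriv (fun y => w t y) x
  let wt := deriv (fun s => w s x) t
  let wxx := deriv (fun y => deriv (fun y' => w t y') y) x
  let wtt := deriv (fun s => deriv (fun s' => w s' x) s) t
  let wxt := deriv (fun y => deriv (fun s => w s y) t) x
  wx * (starRingEnd ℂ wx) ^ 2 * wtt +
    (wx * starRingEnd ℂ wx * wt + wx ^ 2 * starRingEnd ℂ wt) * starRingEnd ℂ wxt +
    starRingEnd ℂ wx * wt * starRingEnd ℂ wt * wxx

def quarticForm (wx wt wxx wtt wxt : ℂ) : ℂ :=
  wx * (starRingEnd ℂ wx) ^ 2 * wtt +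
    (wx * starRingEnd ℂ wx * wt + wx ^ 2 * starRingEnd ℂ wt) * starRingEnd ℂ wxt +
    starRingEnd ℂ wx * wt * starRingEnd ℂ wt * wxx

theorem Qop_eq_quarticForm (w : ℝ → ℝ → ℂ) (t x : ℝ) :
    Qop w t x = quarticForm (deriv (fun y => w t y) x) (deriv (fun s => w s x) t)
      (deriv (fun y => deriv (fun y' => w t y') y) x)
      (deriv (fun s => deriv (fun s' => w s' x) s) t)
      (deriv (fun y => deriv (fun s => w s y) t) x) :=
  rfl

theorem im_quarticForm_conformal (A B wx wt wxx wtt wxt : ℂ) :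
    (quarticForm (A * wx) (A * wt) (B * wx * wx + A * wxx) (B * wt * wt + A * wtt)
      (B * wx * wt + A * wxt)).im = ‖A‖ ^ 4 * (quarticForm wx wt wxx wtt wxt).im := by
  set c := starRingEnd ℂ
  set R : ℂ := A * c A ^ 2 * B * wx * c wx * wt * (c wx * wt + wx * c wt)
  have h_split : quarticForm (A * wx) (A * wt) (B * wx * wx + A * wxx) (B * wt * wt + A * wtt)
      (B * wx * wt + A * wxt) = (A * c A) ^ 2 * quarticForm wx wt wxx wtt wxt + (R + c R) := by
    simp only [quarticForm, c, R, map_mul, map_add, map_pow, Complex.conj_conj]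
    ring
  have h_norm : (A * c A) ^ 2 = ((‖A‖ ^ 4 : ℝ) : ℂ) := by
    rw [Complex.mul_conj, ← Complex.sq_norm]
    push_cast
    ring
  rw [h_split, Complex.add_im, Complex.add_conj, Complex.ofReal_im, add_zero, h_norm,
    Complex.im_ofReal_mul]

theorem deriv_deriv_comp_mul {φ : ℂ → ℂ} {u v D : ℝ → ℂ} {x : ℝ}
    (hD : ∀ y, D y = deriv φ (u y) * v y) (hu : DifferentiableAt ℝ u x)
    (hv : DifferentiableAt ℝ v x) (hφ : DifferentiableAt ℂ (deriv φ) (u x)) :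
    deriv D x = deriv (deriv φ) (u x) * deriv u x * v x + deriv φ (u x) * deriv v x := by
  rw [funext hD]
  exact ((hφ.hasDerivAt.comp x hu.hasDerivAt).mul hv.hasDerivAt).deriv

protected theorem ContDiff.deriv {𝕜 E : Type*} [NontriviallyNormedField 𝕜]
    [NormedAddCommGroup E] [NormedSpace 𝕜 E] {m n : WithTop ℕ∞} {f : 𝕜 → 𝕜 → E} {g : 𝕜 → 𝕜}
    (hf : ContDiff 𝕜 m (Function.uncurry f)) (hg : ContDiff 𝕜 n g) (hnm : n + 1 ≤ m) :
    ContDiff 𝕜 n fun x => deriv (f x) (g x) :=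
  (hf.fderiv hg hnm).clm_apply contDiff_const

section PartialDerivatives

variable {E : Type*} [NormedAddCommGroup E] [NormedSpace ℝ E] {w : ℝ → ℝ → E}

theorem contDiff_partial_snd (hw : ContDiff ℝ 2 fun p : ℝ × ℝ => w p.1 p.2) (s : ℝ) :
    ContDiff ℝ 2 (w s) :=
  hw.comp (contDiff_const.prodMk contDiff_id)

theorem contDiff_partial_fst (hw : ContDiff ℝ 2 fun p : ℝ × ℝ => w p.1 p.2) (y : ℝ) :
    ContDiff ℝ 2 fun s => w s y :=
  hw.comp (contDiff_id.prodMk contDiff_const)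

theorem differentiable_partial_snd (hw : ContDiff ℝ 2 fun p : ℝ × ℝ => w p.1 p.2) (s : ℝ) :
    Differentiable ℝ (w s) :=
  (contDiff_partial_snd hw s).differentiable (by norm_num)

theorem differentiable_partial_fst (hw : ContDiff ℝ 2 fun p : ℝ × ℝ => w p.1 p.2) (y : ℝ) :
    Differentiable ℝ fun s => w s y :=
  (contDiff_partial_fst hw y).differentiable (by norm_num)

theorem differentiable_deriv_partial_snd (hw : ContDiff ℝ 2 fun p : ℝ × ℝ => w p.1 p.2)
    (s : ℝ) : Differentiable ℝ (deriv (w s)) :=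
  ((contDiff_partial_snd hw s).deriv' (n := 1)).differentiable one_ne_zero

theorem differentiable_deriv_partial_fst (hw : ContDiff ℝ 2 fun p : ℝ × ℝ => w p.1 p.2)
    (y : ℝ) : Differentiable ℝ (deriv fun s => w s y) :=
  ((contDiff_partial_fst hw y).deriv' (n := 1)).differentiable one_ne_zero

theorem differentiable_deriv_fst_wrt_snd (hw : ContDiff ℝ 2 fun p : ℝ × ℝ => w p.1 p.2)
    (t : ℝ) : Differentiable ℝ fun y => deriv (fun s => w s y) t :=
  (ContDiff.deriv (f := fun y s => w s y) (hw.comp (contDiff_snd.prodMk contDiff_fst))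
    contDiff_const le_rfl).differentiable one_ne_zero

end PartialDerivatives

/-- Conformal invariance of the geodesic equation: Im[Q[φ∘w]] = |φ′|⁴·Im[Q[w]]. -/
theorem stmt13 (w : ℝ → ℝ → ℂ) (hw : ContDiff ℝ 2 fun p : ℝ × ℝ => w p.1 p.2)
    (V : Set ℂ) (hV : IsOpen V) (φ : ℂ → ℂ) (hφ : DifferentiableOn ℂ φ V)
    (hrange : ∀ t x : ℝ, w t x ∈ V) :
    ∀ t x : ℝ,
      (Qop (fun t' x' => φ (w t' x')) t x).im =
        ‖deriv φ (w t x)‖ ^ 4 * (Qop w t x).im := by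
  intro t x
  have hφ₁ : ∀ z ∈ V, DifferentiableAt ℂ φ z := fun z hz => hφ.differentiableAt (hV.mem_nhds hz)
  have hφ₂ : ∀ z ∈ V, DifferentiableAt ℂ (deriv φ) z :=
    fun z hz => (hφ.deriv hV).differentiableAt (hV.mem_nhds hz)
  have hdx : ∀ s y, deriv (fun y' => φ (w s y')) y = deriv φ (w s y) * deriv (w s) y :=
    fun s y => deriv_comp y (hφ₁ _ (hrange s y)) (differentiable_partial_snd hw s y)
  have hdt : ∀ s y,
      deriv (fun s' => φ (w s' y)) s = deriv φ (w s y) * deriv (fun s' => w s' y) s :=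
    fun s y => deriv_comp s (hφ₁ _ (hrange s y)) (differentiable_partial_fst hw y s)
  rw [Qop_eq_quarticForm, Qop_eq_quarticForm,
    deriv_deriv_comp_mul (hdx t) (differentiable_partial_snd hw t x)
      (differentiable_deriv_partial_snd hw t x) (hφ₂ _ (hrange t x)),
    deriv_deriv_comp_mul (hdt · x) (differentiable_partial_fst hw x t)
      (differentiable_deriv_partial_fst hw x t) (hφ₂ _ (hrange t x)),
    deriv_deriv_comp_mul (hdt t) (differentiable_partial_snd hw t x)
      (differentiable_deriv_fst_wrt_snd hw t x) (hφ₂ _ (hrange t x)), hdx, hdt]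
  exact im_quarticForm_conformal _ _ _ _ _ _ _
end

section
/- Let w : ℝ² → ℂ be twice continuously differentiable, and let σ : ℝ² → ℝ be twice continuously differentiable (a time-dependent reparametrization). Define w_σ(t, x) = w(t, σ(t, x)). Then Im[Q[w_σ]](t, x) = (σₓ(t, x))³ · Im[Q[w]](t, σ(t, x)) at every point, where Q is the quartic second-order operator defined below. -/
section helpers

variable {E : Type*} [NormedAddCommGroup E] [NormedSpace ℝ E]

/-- x-partial as `HasDerivAt`. -/
lemma hdX (f : ℝ × ℝ → E) (hf : Differentiable ℝ f) (t x : ℝ) :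
    HasDerivAt (fun y => f (t, y)) (fderiv ℝ f (t, x) (0, 1)) x := by
  have h := (hf (t, x)).hasFDerivAt.comp_hasDerivAt x
    ((hasDerivAt_const x t).prodMk (hasDerivAt_id x))
  simpa [Function.comp_def] using h

/-- t-partial as `HasDerivAt`. -/
lemma hdT (f : ℝ × ℝ → E) (hf : Differentiable ℝ f) (t x : ℝ) :
    HasDerivAt (fun s => f (s, x)) (fderiv ℝ f (t, x) (1, 0)) t := by
  have h := (hf (t, x)).hasFDerivAt.comp_hasDerivAt t
    ((hasDerivAt_id t).prodMk (hasDerivAt_const t x))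
  simpa [Function.comp_def] using h

/-- Derivative along the curve `s ↦ (s, g s)`. -/
lemma hdCurve (f : ℝ × ℝ → E) (hf : Differentiable ℝ f) {g : ℝ → ℝ} {g' t : ℝ}
    (hg : HasDerivAt g g' t) :
    HasDerivAt (fun s => f (s, g s))
      (fderiv ℝ f (t, g t) (1, 0) + g' • fderiv ℝ f (t, g t) (0, 1)) t := by
  have h := (hf (t, g t)).hasFDerivAt.comp_hasDerivAt t ((hasDerivAt_id t).prodMk hg)
  have e : (fderiv ℝ f (t, g t)) (1, g') =
      fderiv ℝ f (t, g t) (1, 0) + g' • fderiv ℝ f (t, g t) (0, 1) := by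
    rw [← (fderiv ℝ f (t, g t)).map_smul, ← (fderiv ℝ f (t, g t)).map_add]
    norm_num
  rw [← e]; exact h

/-- Composition in the space variable: `y ↦ f (t, g y)`. -/
lemma hdXComp (f : ℝ × ℝ → E) (hf : Differentiable ℝ f) {g : ℝ → ℝ} {g' t x : ℝ}
    (hg : HasDerivAt g g' x) :
    HasDerivAt (fun y => f (t, g y)) (g' • fderiv ℝ f (t, g x) (0, 1)) x := by
  have h := (hf (t, g x)).hasFDerivAt.comp_hasDerivAt x ((hasDerivAt_const x t).prodMk hg)
  have e : (fderiv ℝ f (t, g x)) (0, g') = g' • fderiv ℝ f (t, g x) (0, 1) := by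
    rw [← (fderiv ℝ f (t, g x)).map_smul]; norm_num
  rw [← e]; exact h

/-- Partial derivative functions of a C² map are differentiable. -/
lemma diffPD (f : ℝ × ℝ → E) (hf : ContDiff ℝ 2 f) (v : ℝ × ℝ) :
    Differentiable ℝ (fun p => fderiv ℝ f p v) :=
  ((hf.fderiv_right (m := 1) (by norm_num)).clm_apply contDiff_const).differentiable one_ne_zero

/-- Schwarz symmetry of second partials. -/
lemma schwarz (f : ℝ × ℝ → E) (hf : ContDiff ℝ 2 f) (q : ℝ × ℝ) :
    fderiv ℝ (fun p => fderiv ℝ f p (1, 0)) q (0, 1) =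
    fderiv ℝ (fun p => fderiv ℝ f p (0, 1)) q (1, 0) := by
  have hd : Differentiable ℝ (fderiv ℝ f) :=
    (hf.fderiv_right (m := 1) (by norm_num)).differentiable one_ne_zero
  have h1 : ∀ v : ℝ × ℝ, fderiv ℝ (fun p => fderiv ℝ f p v) q
      = (fderiv ℝ (fderiv ℝ f) q).flip v := by
    intro v
    rw [show (fun p => fderiv ℝ f p v) = fun p => (fderiv ℝ f p) v from rfl,
      fderiv_clm_apply (hd q) (differentiableAt_const v)]
    simp
  rw [h1, h1]
  exact (hf.contDiffAt (x := q)).isSymmSndFDerivAt (by norm_num) (0, 1) (1, 0)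

/-- The pure algebraic identity behind reparametrization covariance. -/
lemma qalg (a b c d e : ℂ) (P Qt R S2 r : ℝ) :
    ((P : ℂ) * a * (starRingEnd ℂ ((P : ℂ) * a)) ^ 2 *
        (c + (Qt : ℂ) * d + ((Qt : ℂ) * (d + (Qt : ℂ) * e) + (R : ℂ) * a)) +
      ((P : ℂ) * a * starRingEnd ℂ ((P : ℂ) * a) * (b + (Qt : ℂ) * a) +
          ((P : ℂ) * a) ^ 2 * starRingEnd ℂ (b + (Qt : ℂ) * a)) *
        starRingEnd ℂ ((P : ℂ) * d + ((Qt : ℂ) * ((P : ℂ) * e) + (S2 : ℂ) * a)) +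
      starRingEnd ℂ ((P : ℂ) * a) * (b + (Qt : ℂ) * a) *
        starRingEnd ℂ (b + (Qt : ℂ) * a) *
          ((P : ℂ) * ((P : ℂ) * e) + (r : ℂ) * a)).im =
    P ^ 3 *
      (a * (starRingEnd ℂ a) ^ 2 * c +
        (a * starRingEnd ℂ a * b + a ^ 2 * starRingEnd ℂ b) * starRingEnd ℂ d +
        starRingEnd ℂ a * b * starRingEnd ℂ b * e).im := by
  simp only [pow_two, Complex.add_im, Complex.add_re, Complex.mul_im, Complex.mul_re,
    Complex.conj_re, Complex.conj_im, Complex.ofReal_re, Complex.ofReal_im]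
  ring

end helpers

/-- Reparametrization covariance: Im[Q[w_σ]](t,x) = σₓ³·Im[Q[w]](t, σ(t,x)). -/
theorem stmt14 (w : ℝ → ℝ → ℂ) (hw : ContDiff ℝ 2 fun p : ℝ × ℝ => w p.1 p.2)
    (σ : ℝ → ℝ → ℝ) (hσ : ContDiff ℝ 2 fun p : ℝ × ℝ => σ p.1 p.2) :
    ∀ t x : ℝ,
      (Qop (fun t' x' => w t' (σ t' x')) t x).im =
        (deriv (fun y => σ t y) x) ^ 3 * (Qop w t (σ t x)).im := by
  intro t x
  have hwd : Differentiable ℝ (fun p : ℝ × ℝ => w p.1 p.2) := hw.differentiable (by norm_num)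
  have hσd : Differentiable ℝ (fun p : ℝ × ℝ => σ p.1 p.2) := hσ.differentiable (by norm_num)
  -- partial derivative functions
  set W : ℝ × ℝ → ℂ := fun p => w p.1 p.2 with hWdef
  set S : ℝ × ℝ → ℝ := fun p => σ p.1 p.2 with hSdef
  have dWt : Differentiable ℝ (fun p => fderiv ℝ W p (1, 0)) := diffPD W hw _
  have dWx : Differentiable ℝ (fun p => fderiv ℝ W p (0, 1)) := diffPD W hw _
  have dSt : Differentiable ℝ (fun p => fderiv ℝ S p (1, 0)) := diffPD S hσ _
  have dSx : Differentiable ℝ (fun p => fderiv ℝ S p (0, 1)) := diffPD S hσ _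
  -- derivatives of σ
  have hσx : ∀ t' x' : ℝ, HasDerivAt (fun y => σ t' y) (fderiv ℝ S (t', x') (0, 1)) x' :=
    fun t' x' => hdX S hσd t' x'
  have hσt : ∀ t' x' : ℝ, HasDerivAt (fun s => σ s x') (fderiv ℝ S (t', x') (1, 0)) t' :=
    fun t' x' => hdT S hσd t' x'
  -- notation for the values
  set P : ℝ := fderiv ℝ S (t, x) (0, 1)
  set Qt : ℝ := fderiv ℝ S (t, x) (1, 0)
  set R : ℝ := fderiv ℝ (fun p => fderiv ℝ S p (1, 0)) (t, x) (1, 0)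
  set S2 : ℝ := fderiv ℝ (fun p => fderiv ℝ S p (1, 0)) (t, x) (0, 1)
  set r : ℝ := fderiv ℝ (fun p => fderiv ℝ S p (0, 1)) (t, x) (0, 1)
  set q : ℝ × ℝ := (t, σ t x) with hq
  set a : ℂ := fderiv ℝ W q (0, 1)
  set b : ℂ := fderiv ℝ W q (1, 0)
  set c : ℂ := fderiv ℝ (fun p => fderiv ℝ W p (1, 0)) q (1, 0)
  set d : ℂ := fderiv ℝ (fun p => fderiv ℝ W p (1, 0)) q (0, 1)
  set d' : ℂ := fderiv ℝ (fun p => fderiv ℝ W p (0, 1)) q (1, 0)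
  set e : ℂ := fderiv ℝ (fun p => fderiv ℝ W p (0, 1)) q (0, 1)
  have hsym : d = d' := schwarz W hw q
  -- first derivatives of w ∘ σ and of w
  have h1 : deriv (fun y => w t (σ t y)) x = P • a :=
    (hdXComp W hwd (hσx t x)).deriv
  have h2 : deriv (fun s => w s (σ s x)) t = b + Qt • a :=
    (hdCurve W hwd (hσt t x)).deriv
  -- second derivatives of w ∘ σ
  have h3 : deriv (fun y => deriv (fun y' => w t (σ t y')) y) x
      = P • (P • e) + r • a := by
    rw [show (fun y => deriv (fun y' => w t (σ t y')) y)
        = fun y => (fun p => fderiv ℝ S p (0, 1)) (t, y) •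
            (fun p => fderiv ℝ W p (0, 1)) (t, σ t y) from
      funext fun y => (hdXComp W hwd (hσx t y)).deriv]
    exact ((hdX (fun p => fderiv ℝ S p (0, 1)) dSx t x).smul
      (hdXComp (fun p => fderiv ℝ W p (0, 1)) dWx (hσx t x))).deriv
  have h4 : deriv (fun s => deriv (fun s' => w s' (σ s' x)) s) t
      = (c + Qt • d) + (Qt • (d' + Qt • e) + R • a) := by
    rw [show (fun s => deriv (fun s' => w s' (σ s' x)) s)
        = fun s => (fun p => fderiv ℝ W p (1, 0)) (s, σ s x) +
            (fun p => fderiv ℝ S p (1, 0)) (s, x) •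
              (fun p => fderiv ℝ W p (0, 1)) (s, σ s x) from
      funext fun s => (hdCurve W hwd (hσt s x)).deriv]
    exact ((hdCurve (fun p => fderiv ℝ W p (1, 0)) dWt (hσt t x)).add
      ((hdT (fun p => fderiv ℝ S p (1, 0)) dSt t x).smul
        (hdCurve (fun p => fderiv ℝ W p (0, 1)) dWx (hσt t x)))).deriv
  have h5 : deriv (fun y => deriv (fun s => w s (σ s y)) t) x
      = P • d + (Qt • (P • e) + S2 • a) := by
    rw [show (fun y => deriv (fun s => w s (σ s y)) t)
        = fun y => (fun p => fderiv ℝ W p (1, 0)) (t, σ t y) +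
            (fun p => fderiv ℝ S p (1, 0)) (t, y) •
              (fun p => fderiv ℝ W p (0, 1)) (t, σ t y) from
      funext fun y => (hdCurve W hwd (hσt t y)).deriv]
    exact ((hdXComp (fun p => fderiv ℝ W p (1, 0)) dWt (hσx t x)).add
      ((hdX (fun p => fderiv ℝ S p (1, 0)) dSt t x).smul
        (hdXComp (fun p => fderiv ℝ W p (0, 1)) dWx (hσx t x)))).deriv
  -- derivatives of w at (t, σ t x)
  have g1 : deriv (fun y => w t y) (σ t x) = a := (hdX W hwd t (σ t x)).deriv
  have g2 : deriv (fun s => w s (σ t x)) t = b := (hdT W hwd t (σ t x)).deriv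
  have g3 : deriv (fun y => deriv (fun y' => w t y') y) (σ t x) = e := by
    rw [show (fun y => deriv (fun y' => w t y') y)
        = fun y => (fun p => fderiv ℝ W p (0, 1)) (t, y) from
      funext fun y => (hdX W hwd t y).deriv]
    exact (hdX (fun p => fderiv ℝ W p (0, 1)) dWx t (σ t x)).deriv
  have g4 : deriv (fun s => deriv (fun s' => w s' (σ t x)) s) t = c := by
    rw [show (fun s => deriv (fun s' => w s' (σ t x)) s)
        = fun s => (fun p => fderiv ℝ W p (1, 0)) (s, σ t x) from
      funext fun s => (hdT W hwd s (σ t x)).deriv]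
    exact (hdT (fun p => fderiv ℝ W p (1, 0)) dWt t (σ t x)).deriv
  have g5 : deriv (fun y => deriv (fun s => w s y) t) (σ t x) = d := by
    rw [show (fun y => deriv (fun s => w s y) t)
        = fun y => (fun p => fderiv ℝ W p (1, 0)) (t, y) from
      funext fun y => (hdT W hwd t y).deriv]
    exact (hdX (fun p => fderiv ℝ W p (1, 0)) dWt t (σ t x)).deriv
  have hP : deriv (fun y => σ t y) x = P := (hσx t x).deriv
  simp only [Qop]
  rw [h1, h2, h3, h4, h5, g1, g2, g3, g4, g5, hP, ← hsym]
  simp only [Complex.real_smul]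
  exact qalg a b c d e P Qt R S2 r
end

section
/- Let M be a set with a multiplication μ : M × M → M satisfying the symmetric space identities (1)–(3). Fix o, p ∈ M and suppose P : ℤ → M satisfies P(0) = o, P(1) = p, and P(n+1) = μ(P(n), P(n−1)) for all n ∈ ℤ. Then for all integers m and n, μ(P(m), P(n)) = P(2m − n). In particular the map m ↦ P(m) is a homomorphism of symmetric spaces from ℤ (with product m·n = 2m − n) to M. -/
/-!
Reflection in `P m`, i.e. `μ (P m)`, is an automorphism of `M` by (3), so it maps a sequence
satisfying `P (n + 1) = μ (P n) (P (n - 1))` to another such sequence; by (2) so does reversing the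
direction of a sequence. Hence `k ↦ μ (P m) (P (m + k))` and `k ↦ P (m - k)` satisfy the same
recurrence, and they agree at `k = 0` and `k = 1`. A solution of the recurrence is determined by two
consecutive values (backwards as well as forwards, by (2)), so they agree everywhere.
-/

namespace SymmetricSpace

variable {M : Type*} (μ : M → M → M)

def IsReflectionSeq (P : ℤ → M) : Prop :=
  ∀ n : ℤ, P (n + 1) = μ (P n) (P (n - 1))

variable {μ}

theorem IsReflectionSeq.reflect_succ (h2 : ∀ p q : M, μ p (μ p q) = q) {P : ℤ → M}
    (hP : IsReflectionSeq μ P) (n : ℤ) : μ (P n) (P (n + 1)) = P (n - 1) := by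
  rw [hP n, h2]

theorem IsReflectionSeq.const_sub (h2 : ∀ p q : M, μ p (μ p q) = q) {P : ℤ → M}
    (hP : IsReflectionSeq μ P) (m : ℤ) : IsReflectionSeq μ (fun k => P (m - k)) := by
  intro k
  dsimp only
  rw [show m - (k + 1) = m - k - 1 by ring, show m - (k - 1) = m - k + 1 by ring]
  exact (hP.reflect_succ h2 (m - k)).symm

theorem IsReflectionSeq.const_add (m : ℤ) {P : ℤ → M} (hP : IsReflectionSeq μ P) :
    IsReflectionSeq μ (fun k => P (m + k)) := by
  intro k
  simpa only [add_assoc, add_sub_assoc] using hP (m + k)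

theorem IsReflectionSeq.map {f : M → M} (hf : ∀ a b, f (μ a b) = μ (f a) (f b)) {P : ℤ → M}
    (hP : IsReflectionSeq μ P) : IsReflectionSeq μ (f ∘ P) := by
  intro n
  simp only [Function.comp_apply, hP n, hf]

theorem IsReflectionSeq.ext (h2 : ∀ p q : M, μ p (μ p q) = q) {P Q : ℤ → M}
    (hP : IsReflectionSeq μ P) (hQ : IsReflectionSeq μ Q) (h0 : P 0 = Q 0) (h1 : P 1 = Q 1) :
    P = Q := by
  suffices h : ∀ n : ℤ, P n = Q n ∧ P (n + 1) = Q (n + 1) from funext fun n => (h n).1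
  intro n
  induction n using Int.induction_on with
  | zero => exact ⟨h0, h1⟩
  | succ n ih =>
    refine ⟨ih.2, ?_⟩
    rw [hP, hQ, add_sub_cancel_right, ih.1, ih.2]
  | pred n ih =>
    refine ⟨?_, by rw [sub_add_cancel]; exact ih.1⟩
    rw [← hP.reflect_succ h2, ← hQ.reflect_succ h2, ih.1, ih.2]

end SymmetricSpace

open SymmetricSpace in
theorem stmt17_general {M : Type*} (μ : M → M → M)
    (h1 : ∀ p : M, μ p p = p) (h2 : ∀ p q : M, μ p (μ p q) = q)
    (h3 : ∀ p q r : M, μ p (μ q r) = μ (μ p q) (μ p r))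
    (p : M) (P : ℤ → M)
    (hrec : ∀ n : ℤ, P (n + 1) = μ (P n) (P (n - 1))) :
    ∀ m n : ℤ, μ (P m) (P n) = P (2 * m - n) := by
  intro m n
  have hP : IsReflectionSeq μ P := hrec
  have key : (fun k => μ (P m) (P (m + k))) = fun k => P (m - k) :=
    ((hP.const_add m).map (h3 (P m))).ext h2 (hP.const_sub h2 m)
      (by simp only [Function.comp_apply, add_zero, sub_zero, h1]) (hP.reflect_succ h2 m)
  have := congrFun key (n - m)
  rwa [add_sub_cancel, show m - (n - m) = 2 * m - n by ring] at this

/-- Powers of p relative to base point o: if P(0) = o, P(1) = p and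
P(n+1) = μ(P(n), P(n−1)) for all n ∈ ℤ, then μ(P(m), P(n)) = P(2m − n), i.e.
m ↦ P(m) is a homomorphism from the symmetric space ℤ (m·n = 2m − n) to M. -/
theorem stmt17 {M : Type*} (μ : M → M → M)
    (h1 : ∀ p : M, μ p p = p) (h2 : ∀ p q : M, μ p (μ p q) = q)
    (h3 : ∀ p q r : M, μ p (μ q r) = μ (μ p q) (μ p r))
    (o p : M) (P : ℤ → M) (hP0 : P 0 = o) (hP1 : P 1 = p)
    (hrec : ∀ n : ℤ, P (n + 1) = μ (P n) (P (n - 1))) :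
    ∀ m n : ℤ, μ (P m) (P n) = P (2 * m - n) :=
  stmt17_general μ h1 h2 h3 p P hrec
end
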